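/- Let X = ℂ² ∖ {z₁z₂ + 1 = 0} and define f : X → ℝ² by f(z₁,z₂) = ((|z₁|² − |z₂|²)/2, log|z₁z₂ + 1|). Then f is a smooth map whose differential is surjective at every point except (0,0); i.e., the critical locus of f is exactly {(0,0)}. -/

import Mathlib

open Complex ContinuousLinearMap

noncomputable def rlin (a : ℂ) : ℂ →L[ℝ] ℝ := a.re • Complex.reCLM + a.im • Complex.imCLM

@[simp] lemma rlin_apply (a v : ℂ) : rlin a v = a.re * v.re + a.im * v.im := by
  simp [rlin]

lemma hasFDerivAt_normSq (z : ℂ) : HasFDerivAt Complex.normSq ((2:ℝ) • rlin z) z := by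
  have h : HasFDerivAt (fun w : ℂ => w.re * w.re + w.im * w.im)
      ((2:ℝ) • rlin z) z := by
    have h1 := (Complex.reCLM.hasFDerivAt (x := z)).mul (Complex.reCLM.hasFDerivAt (x := z))
    have h2 := (Complex.imCLM.hasFDerivAt (x := z)).mul (Complex.imCLM.hasFDerivAt (x := z))
    refine (h1.add h2).congr_fderiv ?_
    ext v <;> (simp [rlin]; try ring)
  exact h.congr_of_eventuallyEq (by filter_upwards with w; simp [Complex.normSq_apply])

/-- The focus-focus fibration f(z₁,z₂) = ((|z₁|² − |z₂|²)/2, log|z₁z₂ + 1|). -/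
noncomputable def ffFib (p : ℂ × ℂ) : ℝ × ℝ :=
  ((‖p.1‖ ^ 2 - ‖p.2‖ ^ 2) / 2,
    Real.log ‖p.1 * p.2 + 1‖)

lemma ffFib_eq : ffFib = fun p : ℂ × ℂ =>
    ((2:ℝ)⁻¹ • (Complex.normSq p.1 - Complex.normSq p.2),
      (2:ℝ)⁻¹ • Real.log (Complex.normSq (p.1 * p.2 + 1))) := by
  funext p
  simp only [ffFib, Complex.sq_norm, smul_eq_mul]
  congr 1
  · ring
  · rw [Complex.norm_def, Real.log_sqrt (Complex.normSq_nonneg _)]; ring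

noncomputable def mulD (p : ℂ × ℂ) : (ℂ × ℂ) →L[ℝ] ℂ :=
  ((ContinuousLinearMap.mul ℝ ℂ p.2).comp (ContinuousLinearMap.fst ℝ ℂ ℂ)) +
    ((ContinuousLinearMap.mul ℝ ℂ p.1).comp (ContinuousLinearMap.snd ℝ ℂ ℂ))

lemma hasFDerivAt_mulp (p : ℂ × ℂ) :
    HasFDerivAt (fun q : ℂ × ℂ => q.1 * q.2 + 1) (mulD p) p := by
  have h : HasFDerivAt (fun q : ℂ × ℂ => q.1 * q.2)
      (p.1 • (ContinuousLinearMap.snd ℝ ℂ ℂ) + p.2 • (ContinuousLinearMap.fst ℝ ℂ ℂ)) p :=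
    (hasFDerivAt_fst (p := p)).mul (hasFDerivAt_snd (p := p))
  have h' := h.add_const (1 : ℂ)
  refine h'.congr_fderiv ?_
  ext v <;> (simp [mulD]; try ring)

noncomputable def ffDeriv (p : ℂ × ℂ) : (ℂ × ℂ) →L[ℝ] ℝ × ℝ :=
  (((rlin p.1).comp (ContinuousLinearMap.fst ℝ ℂ ℂ) -
      (rlin p.2).comp (ContinuousLinearMap.snd ℝ ℂ ℂ))).prod
    ((Complex.normSq (p.1 * p.2 + 1))⁻¹ • ((rlin (p.1 * p.2 + 1)).comp (mulD p)))

lemma ffDeriv_apply (p v : ℂ × ℂ) : ffDeriv p v =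
    (p.1.re * v.1.re + p.1.im * v.1.im - (p.2.re * v.2.re + p.2.im * v.2.im),
      (Complex.normSq (p.1 * p.2 + 1))⁻¹ *
        ((p.1 * p.2 + 1).re * (p.2 * v.1 + p.1 * v.2).re +
          (p.1 * p.2 + 1).im * (p.2 * v.1 + p.1 * v.2).im)) := by
  simp [ffDeriv, mulD, smul_eq_mul]
  ring

lemma ffFib_hasFDerivAt {p : ℂ × ℂ} (hp : p.1 * p.2 + 1 ≠ 0) :
    HasFDerivAt ffFib (ffDeriv p) p := by
  rw [ffFib_eq]
  have h1 : HasFDerivAt (fun q : ℂ × ℂ => (2:ℝ)⁻¹ • (Complex.normSq q.1 - Complex.normSq q.2))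
      ((rlin p.1).comp (ContinuousLinearMap.fst ℝ ℂ ℂ) -
        (rlin p.2).comp (ContinuousLinearMap.snd ℝ ℂ ℂ)) p := by
    have a1 := (hasFDerivAt_normSq p.1).comp p (hasFDerivAt_fst (p := p))
    have a2 := (hasFDerivAt_normSq p.2).comp p (hasFDerivAt_snd (p := p))
    refine ((a1.sub a2).const_smul ((2:ℝ)⁻¹)).congr_fderiv ?_
    ext v <;> (simp; try ring)
  have hw : Complex.normSq (p.1 * p.2 + 1) ≠ 0 := (Complex.normSq_pos.2 hp).ne'
  have h2 : HasFDerivAt (fun q : ℂ × ℂ => (2:ℝ)⁻¹ • Real.log (Complex.normSq (q.1 * q.2 + 1)))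
      ((Complex.normSq (p.1 * p.2 + 1))⁻¹ • ((rlin (p.1 * p.2 + 1)).comp (mulD p))) p := by
    have a1 := (hasFDerivAt_normSq (p.1 * p.2 + 1)).comp p (hasFDerivAt_mulp p)
    refine ((a1.log hw).const_smul ((2:ℝ)⁻¹)).congr_fderiv ?_
    ext v <;> (simp [smul_smul, Function.comp]; try ring) <;> tauto
  exact h1.prodMk h2

/-- On X = ℂ² ∖ {z₁z₂ + 1 = 0}, f is smooth, and its differential is surjective at
every point except (0,0): the critical locus of f is exactly {(0,0)}. -/
theorem stmt5 :
    ContDiffOn ℝ (⊤ : ℕ∞) ffFib {p : ℂ × ℂ | p.1 * p.2 + 1 ≠ 0} ∧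
    ∀ p : ℂ × ℂ, p.1 * p.2 + 1 ≠ 0 →
      (Function.Surjective (fderiv ℝ ffFib p) ↔ p ≠ 0) := by
  have hsq : ContDiff ℝ (⊤ : ℕ∞) Complex.normSq := by
    have : (Complex.normSq : ℂ → ℝ) = fun z => z.re * z.re + z.im * z.im := by
      funext z; exact Complex.normSq_apply z
    rw [this]
    exact (Complex.reCLM.contDiff.mul Complex.reCLM.contDiff).add
      (Complex.imCLM.contDiff.mul Complex.imCLM.contDiff)
  constructor
  · rw [ffFib_eq]
    intro p hp
    apply ContDiffAt.contDiffWithinAt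
    apply ContDiffAt.prodMk
    · exact (((hsq.comp contDiff_fst).sub (hsq.comp contDiff_snd)).const_smul ((2:ℝ)⁻¹)).contDiffAt
    · have hmul : ContDiff ℝ (⊤ : ℕ∞) (fun q : ℂ × ℂ => q.1 * q.2 + 1) :=
        (contDiff_fst.mul contDiff_snd).add contDiff_const
      have : ContDiffAt ℝ (⊤ : ℕ∞) (fun q : ℂ × ℂ => Real.log (Complex.normSq (q.1 * q.2 + 1))) p :=
        by have h := (Real.contDiffAt_log (n := (⊤ : ℕ∞)).2 ((Complex.normSq_pos.2 hp).ne')).comp p ((hsq.comp hmul).contDiffAt); exact h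
      exact this.const_smul ((2:ℝ)⁻¹)
  · intro p hp
    rw [(ffFib_hasFDerivAt hp).fderiv]
    constructor
    · intro hs
      rintro rfl
      obtain ⟨v, hv⟩ := hs (1, 0)
      rw [ffDeriv_apply] at hv
      simpa using congrArg Prod.fst hv
    · intro hp0
      rintro ⟨a, b⟩
      have hw : Complex.normSq (p.1 * p.2 + 1) ≠ 0 := (Complex.normSq_pos.2 hp).ne'
      have hr : Complex.normSq p.1 + Complex.normSq p.2 ≠ 0 := by
        intro h
        apply hp0
        have h1 : Complex.normSq p.1 = 0 := by
          nlinarith [Complex.normSq_nonneg p.1, Complex.normSq_nonneg p.2]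
        have h2 : Complex.normSq p.2 = 0 := by
          nlinarith [Complex.normSq_nonneg p.1, Complex.normSq_nonneg p.2]
        exact Prod.ext (Complex.normSq_eq_zero.1 h1) (Complex.normSq_eq_zero.1 h2)
      set r : ℝ := Complex.normSq p.1 + Complex.normSq p.2 with hrdef
      have hv1 : ffDeriv p (p.1, -p.2) = (r, 0) := by
        rw [ffDeriv_apply]
        refine Prod.ext ?_ ?_
        · simp [hrdef, Complex.normSq_apply]; ring
        · simp [Complex.mul_re, Complex.mul_im]
          right
          ring
      set v' : ℂ × ℂ := ((p.1 * p.2 + 1) * (starRingEnd ℂ) p.2,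
        (p.1 * p.2 + 1) * (starRingEnd ℂ) p.1) with hv'def
      have hv2 : (ffDeriv p v').2 = r := by
        rw [ffDeriv_apply]
        have h : (p.1 * p.2 + 1).re * (p.2 * v'.1 + p.1 * v'.2).re +
            (p.1 * p.2 + 1).im * (p.2 * v'.1 + p.1 * v'.2).im =
            Complex.normSq (p.1 * p.2 + 1) * r := by
          simp only [hv'def, hrdef, Complex.normSq_apply, Complex.mul_re, Complex.mul_im,
            Complex.add_re, Complex.add_im, Complex.conj_re, Complex.conj_im,
            Complex.one_re, Complex.one_im]
          ring
        show (Complex.normSq (p.1 * p.2 + 1))⁻¹ * _ = r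
        rw [h, ← mul_assoc, inv_mul_cancel₀ hw, one_mul]
      set s' : ℝ := (ffDeriv p v').1 with hs'def
      refine ⟨(b / r) • v' + ((a - (b / r) * s') / r) • (p.1, -p.2), ?_⟩
      rw [map_add, map_smul, map_smul, hv1]
      have : ffDeriv p v' = (s', (ffDeriv p v').2) := rfl
      rw [this, hv2]
      rw [Prod.smul_mk, Prod.smul_mk, Prod.mk_add_mk]
      simp only [smul_eq_mul, mul_zero, add_zero]
      refine Prod.ext ?_ ?_
      · show b / r * s' + (a - b / r * s') / r * r = a
        field_simp
        ring
      · show b / r * r = b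
        field_simp
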